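/- arXiv:1004.3006 — 2 statements merged into one kernel-verified Lean document; each statement's English description precedes it below -/
import Mathlib

section
/- Let H be a separable Hilbert space and Φ₁ = (φ_{1,i})_{i∈I₁}, Φ₂ = (φ_{2,i})_{i∈I₂} Parseval frames in H. Suppose for each j ∈ ℕ we are given f_j = P_j + C_j ∈ H with f_j ≠ 0 and ‖Φ₁ᵀP_j‖₁ + ‖Φ₂ᵀC_j‖₁ < ∞, subsets S_{1,j} ⊆ I₁ and S_{2,j} ⊆ I₂, and a pair (W_j, C⋆_j) minimizing ‖Φ₁ᵀT₁‖₁ + ‖Φ₂ᵀT₂‖₁ over all decompositions T₁ + T₂ = f_j. Assume (i) μ_c(S_{1,j}, Φ₁; Φ₂) → 0 and μ_c(S_{2,j}, Φ₂; Φ₁) → 0 as j → ∞, and (ii) δ_j := ‖1_{S_{1,j}ᶜ}Φ₁ᵀP_j‖₁ + ‖1_{S_{2,j}ᶜ}Φ₂ᵀC_j‖₁ = o(‖f_j‖) as j → ∞. Then (‖W_j − P_j‖ + ‖C⋆_j − C_j‖)/‖f_j‖ → 0 as j → ∞. -/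
/-!
Put `h = W - P`, so that `Cs - C = -h`. For a Parseval frame `‖h‖² = ‖Φᵀh‖₂² ≤ ‖Φᵀh‖₁²`, so it
suffices to bound `N = ‖Φ₁ᵀh‖₁ + ‖Φ₂ᵀh‖₁ = A + B`, split into the mass `A` on `S₁, S₂` and `B` on
the complements. Comparing the minimizer with `(P, C)` and using the triangle inequality
separately on `S` and `Sᶜ` gives the cone condition `B ≤ A + 2δ`. Expanding
`⟨φ₁ᵢ, h⟩ = ∑ⱼ ⟨φ₁ᵢ, φ₂ⱼ⟩ ⟨φ₂ⱼ, h⟩` through the Parseval frame `Φ₂` (and symmetrically) gives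
`A ≤ μ_c N`. Once both cluster coherences are at most `1/4`, `N ≤ 2A + 2δ ≤ N/2 + 2δ`, so
`N ≤ 4δ`; dividing by `‖f‖` yields the limit.
-/

open scoped ENNReal NNReal
open Filter

noncomputable section

variable {H : Type*} [NormedAddCommGroup H] [InnerProductSpace ℂ H]

/-- A countable family is a Parseval frame if it satisfies the Parseval identity. -/
def IsParsevalFrame {I : Type*} (Φ : I → H) : Prop :=
  ∀ f : H, ∑' i, ‖(inner ℂ (Φ i) f : ℂ)‖ ^ 2 = ‖f‖ ^ 2

/-- `ℓ¹` norm (in `[0,∞]`) of the analysis coefficients of `f` in the frame `Φ`. -/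
def analysisL1 {I : Type*} (Φ : I → H) (f : H) : ℝ≥0∞ :=
  ∑' i, (‖(inner ℂ (Φ i) f : ℂ)‖₊ : ℝ≥0∞)

/-- `ℓ¹` norm of the analysis coefficients restricted to the index set `S`. -/
def analysisL1On {I : Type*} (Φ : I → H) (S : Set I) (f : H) : ℝ≥0∞ :=
  ∑' i : S, (‖(inner ℂ (Φ (i : I)) f : ℂ)‖₊ : ℝ≥0∞)

/-- Cluster coherence `μ_c(S, Φ; Ψ)` of the frame `Φ` with respect to `Ψ` on `S`. -/
def clusterCoherence {I J : Type*} (Φ : I → H) (Ψ : J → H) (S : Set I) : ℝ≥0∞ :=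
  ⨆ j : J, ∑' i : S, (‖(inner ℂ (Φ (i : I)) (Ψ j) : ℂ)‖₊ : ℝ≥0∞)

theorem ENNReal.tsum_sq_le_sq_tsum {ι : Type*} (a : ι → ℝ≥0∞) :
    ∑' i, a i ^ 2 ≤ (∑' i, a i) ^ 2 :=
  calc ∑' i, a i ^ 2 ≤ ∑' i, a i * ∑' k, a k :=
        ENNReal.tsum_le_tsum fun i => by rw [sq]; gcongr; exact ENNReal.le_tsum i
    _ = (∑' i, a i) ^ 2 := by rw [ENNReal.tsum_mul_right, sq]

section AnalysisL1

variable {I : Type*}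

theorem analysisL1_sub_le (Φ : I → H) (a b : H) :
    analysisL1 Φ (a - b) ≤ analysisL1 Φ a + analysisL1 Φ b := by
  simp only [analysisL1]
  rw [← ENNReal.tsum_add]
  refine ENNReal.tsum_le_tsum fun i => ?_
  rw [inner_sub_right]
  exact_mod_cast nnnorm_sub_le _ _

theorem analysisL1_neg (Φ : I → H) (f : H) : analysisL1 Φ (-f) = analysisL1 Φ f := by
  simp only [analysisL1, inner_neg_right, nnnorm_neg]

theorem analysisL1On_add_analysisL1On_compl (Φ : I → H) (S : Set I) (f : H) :
    analysisL1On Φ S f + analysisL1On Φ Sᶜ f = analysisL1 Φ f :=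
  ENNReal.summable.tsum_add_tsum_compl (f := fun i => (‖(inner ℂ (Φ i) f : ℂ)‖₊ : ℝ≥0∞))
    ENNReal.summable

theorem analysisL1On_add_analysisL1On_compl_le (Φ : I → H) (S : Set I) (x h : H) :
    analysisL1On Φ S x + analysisL1On Φ Sᶜ h ≤
      analysisL1 Φ (x + h) + analysisL1On Φ S h + analysisL1On Φ Sᶜ x := by
  -- `analysisL1On Φ S` is definitionally `analysisL1` of the subfamily indexed by `S`.
  have hS : analysisL1On Φ S x ≤ analysisL1On Φ S (x + h) + analysisL1On Φ S h := by
    have := analysisL1_sub_le (fun i : S => Φ i) (x + h) h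
    rwa [add_sub_cancel_right] at this
  have hSc : analysisL1On Φ Sᶜ h ≤ analysisL1On Φ Sᶜ (x + h) + analysisL1On Φ Sᶜ x := by
    have := analysisL1_sub_le (fun i : ↥Sᶜ => Φ i) (x + h) x
    rwa [add_sub_cancel_left] at this
  calc _ ≤ (analysisL1On Φ S (x + h) + analysisL1On Φ S h) +
        (analysisL1On Φ Sᶜ (x + h) + analysisL1On Φ Sᶜ x) := add_le_add hS hSc
    _ = _ := by rw [← analysisL1On_add_analysisL1On_compl Φ S (x + h)]; ring

end AnalysisL1

namespace IsParsevalFrame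

variable {I : Type*}

theorem summable_sq {Φ : I → H} (hΦ : IsParsevalFrame Φ) (f : H) :
    Summable fun i => ‖(inner ℂ (Φ i) f : ℂ)‖ ^ 2 := by
  by_contra hs
  obtain rfl : f = 0 := by
    simpa [tsum_eq_zero_of_not_summable hs, eq_comm] using hΦ f
  simp at hs

theorem tsum_enorm_sq {Φ : I → H} (hΦ : IsParsevalFrame Φ) (f : H) :
    ∑' i, (‖(inner ℂ (Φ i) f : ℂ)‖₊ : ℝ≥0∞) ^ 2 = ENNReal.ofReal ‖f‖ ^ 2 := by
  rw [← ENNReal.ofReal_pow (norm_nonneg f), ← hΦ f,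
    ENNReal.ofReal_tsum_of_nonneg (fun i => by positivity) (hΦ.summable_sq f)]
  simp only [ENNReal.ofReal_pow (norm_nonneg _), ofReal_norm, enorm_eq_nnnorm]

theorem ofReal_norm_le_analysisL1 {Φ : I → H} (hΦ : IsParsevalFrame Φ) (f : H) :
    ENNReal.ofReal ‖f‖ ≤ analysisL1 Φ f := by
  rw [← ENNReal.pow_le_pow_left_iff two_ne_zero, ← hΦ.tsum_enorm_sq]
  exact ENNReal.tsum_sq_le_sq_tsum _

def analysis {Φ : I → H} (hΦ : IsParsevalFrame Φ) : H →ₗᵢ[ℂ] lp (fun _ : I => ℂ) 2 where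
  toFun f := ⟨fun i => inner ℂ (Φ i) f, memℓp_gen (by simpa using hΦ.summable_sq f)⟩
  map_add' f g := Subtype.ext <| funext fun i => inner_add_right _ _ _
  map_smul' c f := Subtype.ext <| funext fun i => inner_smul_right _ _ _
  norm_map' f := by
    rw [lp.norm_eq_tsum_rpow (by norm_num)]
    simp only [ENNReal.toReal_ofNat, Real.rpow_two]
    change (∑' i, ‖(inner ℂ (Φ i) f : ℂ)‖ ^ 2) ^ _ = _
    rw [hΦ f, ← Real.sqrt_eq_rpow, Real.sqrt_sq (norm_nonneg f)]

theorem inner_eq_tsum {Φ : I → H} (hΦ : IsParsevalFrame Φ) (u f : H) :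
    inner ℂ u f = ∑' i, inner ℂ u (Φ i) * inner ℂ (Φ i) f := by
  rw [← hΦ.analysis.inner_map_map u f, lp.inner_eq_tsum]
  congr 1 with i
  rw [RCLike.inner_apply, ← inner_conj_symm u (Φ i), mul_comm]
  rfl

theorem enorm_inner_le_tsum {Φ : I → H} (hΦ : IsParsevalFrame Φ) (u f : H) :
    (‖(inner ℂ u f : ℂ)‖₊ : ℝ≥0∞) ≤
      ∑' i, (‖(inner ℂ u (Φ i) : ℂ)‖₊ : ℝ≥0∞) * ‖(inner ℂ (Φ i) f : ℂ)‖₊ := by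
  rw [hΦ.inner_eq_tsum u f]
  refine (enorm_tsum_le_tsum_enorm (ε := ℂ)).trans_eq ?_
  simp only [enorm_eq_nnnorm, nnnorm_mul, ENNReal.coe_mul]

end IsParsevalFrame

theorem analysisL1On_le_clusterCoherence_mul {I J : Type*} (Φ : I → H) {Ψ : J → H}
    (hΨ : IsParsevalFrame Ψ) (S : Set I) (f : H) :
    analysisL1On Φ S f ≤ clusterCoherence Φ Ψ S * analysisL1 Ψ f :=
  calc analysisL1On Φ S f
      ≤ ∑' i : S, ∑' j, (‖(inner ℂ (Φ i) (Ψ j) : ℂ)‖₊ : ℝ≥0∞) * ‖(inner ℂ (Ψ j) f : ℂ)‖₊ :=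
        ENNReal.tsum_le_tsum fun i => hΨ.enorm_inner_le_tsum _ f
    _ = ∑' j, (∑' i : S, (‖(inner ℂ (Φ i) (Ψ j) : ℂ)‖₊ : ℝ≥0∞)) * ‖(inner ℂ (Ψ j) f : ℂ)‖₊ := by
        rw [ENNReal.tsum_comm]
        simp only [ENNReal.tsum_mul_right]
    _ ≤ ∑' j, clusterCoherence Φ Ψ S * ‖(inner ℂ (Ψ j) f : ℂ)‖₊ :=
        ENNReal.tsum_le_tsum fun j => by
          gcongr
          exact le_iSup (fun j => ∑' i : S, (‖(inner ℂ (Φ i) (Ψ j) : ℂ)‖₊ : ℝ≥0∞)) j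
    _ = clusterCoherence Φ Ψ S * analysisL1 Ψ f := ENNReal.tsum_mul_left

section Separation

variable {I₁ I₂ : Type*} {Φ₁ : I₁ → H} {Φ₂ : I₂ → H} {S₁ : Set I₁} {S₂ : Set I₂} {P C : H}

theorem analysisL1On_compl_add_le_of_le (h : H) (hfin : analysisL1 Φ₁ P + analysisL1 Φ₂ C ≠ ⊤)
    (hmin : analysisL1 Φ₁ (P + h) + analysisL1 Φ₂ (C - h) ≤ analysisL1 Φ₁ P + analysisL1 Φ₂ C) :
    analysisL1On Φ₁ S₁ᶜ h + analysisL1On Φ₂ S₂ᶜ h ≤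
      analysisL1On Φ₁ S₁ h + analysisL1On Φ₂ S₂ h +
        2 * (analysisL1On Φ₁ S₁ᶜ P + analysisL1On Φ₂ S₂ᶜ C) := by
  have h₁ := analysisL1On_add_analysisL1On_compl_le Φ₁ S₁ P h
  have h₂ := analysisL1On_add_analysisL1On_compl_le Φ₂ S₂ C (-h)
  have hneg (S : Set I₂) : analysisL1On Φ₂ S (-h) = analysisL1On Φ₂ S h :=
    analysisL1_neg (fun i : S => Φ₂ i) h
  rw [← sub_eq_add_neg, hneg, hneg] at h₂
  have hfin_on : analysisL1On Φ₁ S₁ P + analysisL1On Φ₂ S₂ C ≠ ⊤ :=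
    ne_top_of_le_ne_top hfin <| add_le_add
      (le_self_add.trans_eq (analysisL1On_add_analysisL1On_compl Φ₁ S₁ P))
      (le_self_add.trans_eq (analysisL1On_add_analysisL1On_compl Φ₂ S₂ C))
  refine (ENNReal.add_le_add_iff_left hfin_on).1 ?_
  calc _ = (analysisL1On Φ₁ S₁ P + analysisL1On Φ₁ S₁ᶜ h) +
        (analysisL1On Φ₂ S₂ C + analysisL1On Φ₂ S₂ᶜ h) := by ring
    _ ≤ (analysisL1 Φ₁ (P + h) + analysisL1On Φ₁ S₁ h + analysisL1On Φ₁ S₁ᶜ P) +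
        (analysisL1 Φ₂ (C - h) + analysisL1On Φ₂ S₂ h + analysisL1On Φ₂ S₂ᶜ C) :=
        add_le_add h₁ h₂
    _ = (analysisL1 Φ₁ (P + h) + analysisL1 Φ₂ (C - h)) + (analysisL1On Φ₁ S₁ h +
        analysisL1On Φ₂ S₂ h + (analysisL1On Φ₁ S₁ᶜ P + analysisL1On Φ₂ S₂ᶜ C)) := by ring
    _ ≤ (analysisL1 Φ₁ P + analysisL1 Φ₂ C) + (analysisL1On Φ₁ S₁ h +
        analysisL1On Φ₂ S₂ h + (analysisL1On Φ₁ S₁ᶜ P + analysisL1On Φ₂ S₂ᶜ C)) := by gcongr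
    _ = _ := by
        rw [← analysisL1On_add_analysisL1On_compl Φ₁ S₁ P,
          ← analysisL1On_add_analysisL1On_compl Φ₂ S₂ C]
        ring

theorem four_mul_analysisL1On_add_le (hΦ₁ : IsParsevalFrame Φ₁) (hΦ₂ : IsParsevalFrame Φ₂)
    (h : H) (hμ₁ : clusterCoherence Φ₁ Φ₂ S₁ ≤ 4⁻¹) (hμ₂ : clusterCoherence Φ₂ Φ₁ S₂ ≤ 4⁻¹) :
    4 * (analysisL1On Φ₁ S₁ h + analysisL1On Φ₂ S₂ h) ≤ analysisL1 Φ₁ h + analysisL1 Φ₂ h := by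
  rw [ENNReal.le_inv_iff_mul_le] at hμ₁ hμ₂
  calc _ ≤ 4 * (clusterCoherence Φ₁ Φ₂ S₁ * analysisL1 Φ₂ h +
        clusterCoherence Φ₂ Φ₁ S₂ * analysisL1 Φ₁ h) := by
        gcongr
        · exact analysisL1On_le_clusterCoherence_mul Φ₁ hΦ₂ S₁ h
        · exact analysisL1On_le_clusterCoherence_mul Φ₂ hΦ₁ S₂ h
    _ = clusterCoherence Φ₁ Φ₂ S₁ * 4 * analysisL1 Φ₂ h +
        clusterCoherence Φ₂ Φ₁ S₂ * 4 * analysisL1 Φ₁ h := by ring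
    _ ≤ analysisL1 Φ₂ h + analysisL1 Φ₁ h :=
        add_le_add (mul_le_of_le_one_left zero_le hμ₁) (mul_le_of_le_one_left zero_le hμ₂)
    _ = _ := add_comm _ _

theorem analysisL1_add_analysisL1_le_of_le (hΦ₁ : IsParsevalFrame Φ₁) (hΦ₂ : IsParsevalFrame Φ₂)
    (h : H) (hfin : analysisL1 Φ₁ P + analysisL1 Φ₂ C ≠ ⊤)
    (hmin : analysisL1 Φ₁ (P + h) + analysisL1 Φ₂ (C - h) ≤ analysisL1 Φ₁ P + analysisL1 Φ₂ C)
    (hμ₁ : clusterCoherence Φ₁ Φ₂ S₁ ≤ 4⁻¹) (hμ₂ : clusterCoherence Φ₂ Φ₁ S₂ ≤ 4⁻¹) :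
    analysisL1 Φ₁ h + analysisL1 Φ₂ h ≤
      4 * (analysisL1On Φ₁ S₁ᶜ P + analysisL1On Φ₂ S₂ᶜ C) := by
  have hN : analysisL1 Φ₁ h + analysisL1 Φ₂ h ≠ ⊤ := by
    refine ne_top_of_le_ne_top (ENNReal.add_ne_top.2 ⟨hfin, hfin⟩) ?_
    calc _ ≤ (analysisL1 Φ₁ (P + h) + analysisL1 Φ₁ P) +
          (analysisL1 Φ₂ C + analysisL1 Φ₂ (C - h)) := by
          gcongr
          · simpa using analysisL1_sub_le Φ₁ (P + h) P
          · simpa using analysisL1_sub_le Φ₂ C (C - h)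
      _ = (analysisL1 Φ₁ (P + h) + analysisL1 Φ₂ (C - h)) +
          (analysisL1 Φ₁ P + analysisL1 Φ₂ C) := by ring
      _ ≤ _ := by gcongr
  have hA := four_mul_analysisL1On_add_le hΦ₁ hΦ₂ h hμ₁ hμ₂
  have hcone := analysisL1On_compl_add_le_of_le (S₁ := S₁) (S₂ := S₂) h hfin hmin
  have hsplit : analysisL1 Φ₁ h + analysisL1 Φ₂ h =
      (analysisL1On Φ₁ S₁ h + analysisL1On Φ₂ S₂ h) +
        (analysisL1On Φ₁ S₁ᶜ h + analysisL1On Φ₂ S₂ᶜ h) := by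
    rw [← analysisL1On_add_analysisL1On_compl Φ₁ S₁ h,
      ← analysisL1On_add_analysisL1On_compl Φ₂ S₂ h]
    ring
  rw [hsplit] at hN hA ⊢
  set A := analysisL1On Φ₁ S₁ h + analysisL1On Φ₂ S₂ h
  set B := analysisL1On Φ₁ S₁ᶜ h + analysisL1On Φ₂ S₂ᶜ h
  set δ := analysisL1On Φ₁ S₁ᶜ P + analysisL1On Φ₂ S₂ᶜ C
  refine (ENNReal.add_le_add_iff_left hN).1 ?_
  calc A + B + (A + B) ≤ 2 * (A + (A + 2 * δ)) := by rw [← two_mul]; gcongr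
    _ = 4 * A + 4 * δ := by ring
    _ ≤ A + B + 4 * δ := by gcongr

theorem ofReal_norm_sub_add_norm_sub_le (hΦ₁ : IsParsevalFrame Φ₁) (hΦ₂ : IsParsevalFrame Φ₂)
    {W Cs : H} (hsum : W + Cs = P + C) (hfin : analysisL1 Φ₁ P + analysisL1 Φ₂ C ≠ ⊤)
    (hmin : analysisL1 Φ₁ W + analysisL1 Φ₂ Cs ≤ analysisL1 Φ₁ P + analysisL1 Φ₂ C)
    (hμ₁ : clusterCoherence Φ₁ Φ₂ S₁ ≤ 4⁻¹) (hμ₂ : clusterCoherence Φ₂ Φ₁ S₂ ≤ 4⁻¹) :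
    ENNReal.ofReal (‖W - P‖ + ‖Cs - C‖) ≤
      4 * (analysisL1On Φ₁ S₁ᶜ P + analysisL1On Φ₂ S₂ᶜ C) := by
  obtain ⟨h, rfl⟩ : ∃ h, W = P + h := ⟨W - P, (add_sub_cancel P W).symm⟩
  obtain rfl : Cs = C - h := by
    rw [eq_sub_iff_add_eq, ← add_left_cancel_iff (a := P), ← hsum]
    abel
  rw [add_sub_cancel_left, sub_sub_cancel_left, norm_neg,
    ENNReal.ofReal_add (norm_nonneg h) (norm_nonneg h)]
  calc _ ≤ analysisL1 Φ₁ h + analysisL1 Φ₂ h :=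
        add_le_add (hΦ₁.ofReal_norm_le_analysisL1 h) (hΦ₂.ofReal_norm_le_analysisL1 h)
    _ ≤ _ := analysisL1_add_analysisL1_le_of_le hΦ₁ hΦ₂ h hfin hmin hμ₁ hμ₂

end Separation

theorem asymptotic_separation_general
    {I₁ I₂ : Type*}
    (Φ₁ : I₁ → H) (Φ₂ : I₂ → H)
    (hΦ₁ : IsParsevalFrame Φ₁) (hΦ₂ : IsParsevalFrame Φ₂)
    (f P C : ℕ → H) (hf : ∀ j, f j = P j + C j) (hne : ∀ j, f j ≠ 0)
    (hfin : ∀ j, analysisL1 Φ₁ (P j) + analysisL1 Φ₂ (C j) < ⊤)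
    (S₁ : ℕ → Set I₁) (S₂ : ℕ → Set I₂)
    (W Cs : ℕ → H) (hsum : ∀ j, W j + Cs j = f j)
    (hmin : ∀ j, ∀ T₁ T₂ : H, T₁ + T₂ = f j →
      analysisL1 Φ₁ (W j) + analysisL1 Φ₂ (Cs j) ≤ analysisL1 Φ₁ T₁ + analysisL1 Φ₂ T₂)
    (hμ₁ : Tendsto (fun j => clusterCoherence Φ₁ Φ₂ (S₁ j)) atTop (nhds 0))
    (hμ₂ : Tendsto (fun j => clusterCoherence Φ₂ Φ₁ (S₂ j)) atTop (nhds 0))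
    (hδ : Tendsto (fun j =>
        (analysisL1On Φ₁ (S₁ j)ᶜ (P j) + analysisL1On Φ₂ (S₂ j)ᶜ (C j)) /
          ENNReal.ofReal ‖f j‖) atTop (nhds 0)) :
    Tendsto (fun j => (‖W j - P j‖ + ‖Cs j - C j‖) / ‖f j‖) atTop (nhds 0) := by
  have hbound : ∀ᶠ j in atTop, ENNReal.ofReal ((‖W j - P j‖ + ‖Cs j - C j‖) / ‖f j‖) ≤
      4 * ((analysisL1On Φ₁ (S₁ j)ᶜ (P j) + analysisL1On Φ₂ (S₂ j)ᶜ (C j)) /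
        ENNReal.ofReal ‖f j‖) := by
    have hquarter : (0 : ℝ≥0∞) < 4⁻¹ := by norm_num
    filter_upwards [hμ₁.eventually (ge_mem_nhds hquarter), hμ₂.eventually (ge_mem_nhds hquarter)]
      with j hμ₁j hμ₂j
    rw [ENNReal.ofReal_div_of_pos (norm_pos_iff.2 (hne j)), ← mul_div_assoc]
    gcongr
    exact ofReal_norm_sub_add_norm_sub_le hΦ₁ hΦ₂ ((hsum j).trans (hf j)) (hfin j).ne
      (hmin j _ _ (hf j).symm) hμ₁j hμ₂j
  have hlim : Tendsto (fun j => ENNReal.ofReal ((‖W j - P j‖ + ‖Cs j - C j‖) / ‖f j‖))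
      atTop (nhds 0) := by
    refine tendsto_of_tendsto_of_tendsto_of_le_of_le' tendsto_const_nhds ?_
      (Eventually.of_forall fun j => zero_le) hbound
    simpa using ENNReal.Tendsto.const_mul hδ (Or.inr ENNReal.ofNat_ne_top)
  rw [← ENNReal.tendsto_toReal_zero_iff] at hlim
  exact hlim.congr fun j => ENNReal.toReal_ofReal (by positivity)

/-- Corollary 2.5: asymptotically negligible cluster coherence and cluster approximation
errors yield asymptotically near-perfect separation by `ℓ₁` minimization. -/
theorem asymptotic_separation
    [CompleteSpace H] [SecondCountableTopology H]
    {I₁ I₂ : Type*} [Countable I₁] [Countable I₂]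
    (Φ₁ : I₁ → H) (Φ₂ : I₂ → H)
    (hΦ₁ : IsParsevalFrame Φ₁) (hΦ₂ : IsParsevalFrame Φ₂)
    (f P C : ℕ → H) (hf : ∀ j, f j = P j + C j) (hne : ∀ j, f j ≠ 0)
    (hfin : ∀ j, analysisL1 Φ₁ (P j) + analysisL1 Φ₂ (C j) < ⊤)
    (S₁ : ℕ → Set I₁) (S₂ : ℕ → Set I₂)
    (W Cs : ℕ → H) (hsum : ∀ j, W j + Cs j = f j)
    (hmin : ∀ j, ∀ T₁ T₂ : H, T₁ + T₂ = f j →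
      analysisL1 Φ₁ (W j) + analysisL1 Φ₂ (Cs j) ≤ analysisL1 Φ₁ T₁ + analysisL1 Φ₂ T₂)
    (hμ₁ : Tendsto (fun j => clusterCoherence Φ₁ Φ₂ (S₁ j)) atTop (nhds 0))
    (hμ₂ : Tendsto (fun j => clusterCoherence Φ₂ Φ₁ (S₂ j)) atTop (nhds 0))
    (hδ : Tendsto (fun j =>
        (analysisL1On Φ₁ (S₁ j)ᶜ (P j) + analysisL1On Φ₂ (S₂ j)ᶜ (C j)) /
          ENNReal.ofReal ‖f j‖) atTop (nhds 0)) :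
    Tendsto (fun j => (‖W j - P j‖ + ‖Cs j - C j‖) / ‖f j‖) atTop (nhds 0) :=
  asymptotic_separation_general Φ₁ Φ₂ hΦ₁ hΦ₂ f P C hf hne hfin S₁ S₂ W Cs hsum hmin hμ₁ hμ₂ hδ
end
end

section
/- For every real N > 2 there are constants c₃, c₄, c₅ > 0 (depending only on N) such that for all a > 0 and b > 0: ∑_{k ∈ ℤ²} ⟨(a|k| − b)₊⟩^{−N} ≤ (b/a)² · (c₃ + c₄ · b^{−N}) + c₅, where |k| is the Euclidean norm of k ∈ ℤ² ⊂ ℝ² and (x)₊ = max{x, 0}. -/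
open scoped ENNReal

noncomputable section

/-- The analyst's bracket `⟨t⟩ = (1 + t²)^{1/2}`. -/
def jap (t : ℝ) : ℝ := Real.sqrt (1 + t ^ 2)

/-!
Since `|kᵢ| ≤ |k|` and `t ↦ ⟨(a t - b)₊⟩^{-N}` is antitone, each summand is at most the product
`⟨(a|k₁| - b)₊⟩^{-N/2} ⟨(a|k₂| - b)₊⟩^{-N/2}`, so the lattice sum is at most the square of a
one-dimensional sum with exponent `N/2 > 1`. In one dimension, the fewer than `(b + 1)/a + 1` terms
with `a n < b + 1` are at most `1` each, and the remaining ones, grouped into blocks of `⌈1/a⌉`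
consecutive terms, are dominated by `⌈1/a⌉ ζ(N/2)`. Squaring the resulting bound
`C (b/a + 1/a + 1)` and using `1 ≤ b² (1 + b^{-N})` to absorb `1/a²` gives the claim.
-/

lemma one_le_jap (t : ℝ) : 1 ≤ jap t :=
  Real.one_le_sqrt.mpr (by nlinarith [sq_nonneg t])

lemma jap_pos (t : ℝ) : 0 < jap t := one_pos.trans_le (one_le_jap t)

lemma le_jap (t : ℝ) : t ≤ jap t :=
  Real.le_sqrt_of_sq_le (by linarith)

lemma jap_le_jap {s t : ℝ} (hs : 0 ≤ s) (hst : s ≤ t) : jap s ≤ jap t :=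
  Real.sqrt_le_sqrt (by nlinarith)

lemma jap_posPart_rpow_neg_anti {a b p r s : ℝ} (ha : 0 ≤ a) (hp : 0 ≤ p) (hrs : r ≤ s) :
    jap (max (a * s - b) 0) ^ (-p) ≤ jap (max (a * r - b) 0) ^ (-p) :=
  Real.rpow_le_rpow_of_nonpos (jap_pos _)
    (jap_le_jap (le_max_right _ _) (max_le_max_right 0 (by nlinarith))) (neg_nonpos.mpr hp)

lemma jap_posPart_rpow_neg_le_mul {a b N : ℝ} (ha : 0 ≤ a) (hN : 0 ≤ N) (x y : ℝ) :
    jap (max (a * √(x ^ 2 + y ^ 2) - b) 0) ^ (-N) ≤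
      jap (max (a * |x| - b) 0) ^ (-(N / 2)) * jap (max (a * |y| - b) 0) ^ (-(N / 2)) := by
  have hsplit : -N = -(N / 2) + -(N / 2) := by ring
  rw [hsplit, Real.rpow_add (jap_pos _)]
  exact mul_le_mul
    (jap_posPart_rpow_neg_anti ha (by linarith) (Real.abs_le_sqrt (by nlinarith [sq_nonneg y])))
    (jap_posPart_rpow_neg_anti ha (by linarith) (Real.abs_le_sqrt (by nlinarith [sq_nonneg x])))
    (Real.rpow_nonneg (jap_pos _).le _) (Real.rpow_nonneg (jap_pos _).le _)

lemma natCast_div_ceil_inv_le {a : ℝ} (ha : 0 < a) (m : ℕ) :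
    ((m / ⌈1 / a⌉₊ : ℕ) : ℝ) ≤ a * m := by
  have hq : 1 ≤ a * ⌈1 / a⌉₊ := by
    rw [← div_le_iff₀' ha]; exact Nat.le_ceil _
  have hmul : ((⌈1 / a⌉₊ * (m / ⌈1 / a⌉₊) : ℕ) : ℝ) ≤ m := by exact_mod_cast Nat.mul_div_le m _
  push_cast at hmul
  nlinarith [(Nat.cast_nonneg (m / ⌈1 / a⌉₊) : (0 : ℝ) ≤ _)]

lemma ENNReal.tsum_comp_div (f : ℕ → ℝ≥0∞) (q : ℕ) [NeZero q] :
    ∑' n, f (n / q) = q * ∑' n, f n := by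
  rw [← (Nat.divModEquiv q).symm.tsum_eq, ENNReal.tsum_prod', ← ENNReal.tsum_mul_left]
  refine tsum_congr fun n => ?_
  have hdiv (r : Fin q) : (q * n + r) / q = n := by
    rw [Nat.mul_add_div (NeZero.pos q), Nat.div_eq_of_lt r.isLt, add_zero]
  simp [Nat.divModEquiv, hdiv, mul_comm]

lemma ENNReal.tsum_comp_sub (f : ℕ → ℝ≥0∞) (M : ℕ) :
    ∑' n, f (n - M) = M * f 0 + ∑' n, f n := by
  rw [← (Summable.sum_add_tsum_nat_add' (k := M) ENNReal.summable)]
  congr 1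
  · rw [Finset.sum_congr rfl fun i hi => by rw [Nat.sub_eq_zero_of_le (Finset.mem_range.mp hi).le]]
    simp
  · simp

lemma ENNReal.tsum_int_natAbs_le (f : ℕ → ℝ≥0∞) : ∑' i : ℤ, f i.natAbs ≤ 2 * ∑' n, f n := by
  rw [tsum_of_nat_of_neg_add_one ENNReal.summable ENNReal.summable, two_mul]
  exact add_le_add (by simp) (ENNReal.tsum_comp_le_tsum_of_injective (add_left_injective 1) f)

def realZeta (p : ℝ) : ℝ := ∑' n : ℕ, ((n : ℝ) + 1) ^ (-p)

lemma realZeta_nonneg (p : ℝ) : 0 ≤ realZeta p :=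
  tsum_nonneg fun _ => by positivity

lemma summable_rpow_neg_nat_add_one {p : ℝ} (hp : 1 < p) :
    Summable fun n : ℕ => ((n : ℝ) + 1) ^ (-p) := by
  refine ((Real.summable_one_div_nat_add_rpow 1 p).mpr hp).congr fun n => ?_
  rw [abs_of_pos (by positivity), one_div, Real.rpow_neg (by positivity)]

-- Past `M = ⌈(b + 1)/a⌉` the bracket is at least `a (n - M) + 1`, and blocks of length
-- `⌈1/a⌉ ≥ 1/a` turn the spacing `a` into spacing at least `1`.
lemma jap_posPart_rpow_neg_le {a b p : ℝ} (ha : 0 < a) (hp : 0 ≤ p) (n : ℕ) :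
    jap (max (a * n - b) 0) ^ (-p) ≤
      ((((n - ⌈(b + 1) / a⌉₊) / ⌈1 / a⌉₊ : ℕ) : ℝ) + 1) ^ (-p) := by
  refine Real.rpow_le_rpow_of_nonpos (by positivity) ?_ (neg_nonpos.mpr hp)
  set M := ⌈(b + 1) / a⌉₊
  rcases le_or_gt M n with hMn | hnM
  · have hM : b + 1 ≤ a * M := by rw [← div_le_iff₀' ha]; exact Nat.le_ceil _
    have hdiv := natCast_div_ceil_inv_le ha (n - M)
    rw [Nat.cast_sub hMn] at hdiv
    calc _ ≤ a * n - b := by linarith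
      _ ≤ jap (max (a * n - b) 0) := (le_max_left _ _).trans (le_jap _)
  · simpa [Nat.sub_eq_zero_of_le hnM.le] using one_le_jap _

lemma tsum_jap_posPart_rpow_neg_nat_le {a b p : ℝ} (ha : 0 < a) (hb : 0 ≤ b) (hp : 1 < p) :
    ∑' n : ℕ, ENNReal.ofReal (jap (max (a * n - b) 0) ^ (-p)) ≤
      ENNReal.ofReal ((1 + realZeta p) * (b / a + 1 / a + 1)) := by
  set M := ⌈(b + 1) / a⌉₊
  set q := ⌈1 / a⌉₊
  have : NeZero q := ⟨(Nat.ceil_pos.mpr (by positivity)).ne'⟩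
  have hM : (M : ℝ) ≤ (b + 1) / a + 1 := (Nat.ceil_lt_add_one (by positivity)).le
  have hq : (q : ℝ) ≤ 1 / a + 1 := (Nat.ceil_lt_add_one (by positivity)).le
  have hZ := realZeta_nonneg p
  calc ∑' n : ℕ, ENNReal.ofReal (jap (max (a * n - b) 0) ^ (-p))
      ≤ ∑' n : ℕ, ENNReal.ofReal (((((n - M) / q : ℕ) : ℝ) + 1) ^ (-p)) :=
        ENNReal.tsum_le_tsum fun n =>
          ENNReal.ofReal_le_ofReal (jap_posPart_rpow_neg_le ha (by linarith) n)
    _ = M + q * ENNReal.ofReal (realZeta p) := by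
        rw [ENNReal.tsum_comp_sub (fun m => ENNReal.ofReal ((((m / q : ℕ) : ℝ) + 1) ^ (-p))),
          ENNReal.tsum_comp_div (fun m => ENNReal.ofReal (((m : ℝ) + 1) ^ (-p))), realZeta,
          ENNReal.ofReal_tsum_of_nonneg (fun _ => by positivity)
            (summable_rpow_neg_nat_add_one hp)]
        simp
    _ = ENNReal.ofReal (M + q * realZeta p) := by
        rw [ENNReal.ofReal_add (by positivity) (by positivity), ENNReal.ofReal_mul (by positivity)]
        simp
    _ ≤ ENNReal.ofReal ((1 + realZeta p) * (b / a + 1 / a + 1)) := by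
        refine ENNReal.ofReal_le_ofReal ?_
        have : (q : ℝ) * realZeta p ≤ (1 / a + 1) * realZeta p := by gcongr
        have : 0 ≤ b / a * realZeta p := by positivity
        linarith [add_div b 1 a]

lemma tsum_jap_posPart_rpow_neg_int_le {a b p : ℝ} (ha : 0 < a) (hb : 0 ≤ b) (hp : 1 < p) :
    ∑' i : ℤ, ENNReal.ofReal (jap (max (a * |(i : ℝ)| - b) 0) ^ (-p)) ≤
      ENNReal.ofReal (2 * (1 + realZeta p) * (b / a + 1 / a + 1)) := by
  simp_rw [← Int.cast_abs, ← Nat.cast_natAbs (α := ℝ)]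
  calc _ ≤ 2 * ∑' n : ℕ, ENNReal.ofReal (jap (max (a * n - b) 0) ^ (-p)) :=
        ENNReal.tsum_int_natAbs_le fun n => ENNReal.ofReal (jap (max (a * n - b) 0) ^ (-p))
    _ ≤ 2 * ENNReal.ofReal ((1 + realZeta p) * (b / a + 1 / a + 1)) := by
        gcongr; exact tsum_jap_posPart_rpow_neg_nat_le ha hb hp
    _ = _ := by rw [mul_assoc, ENNReal.ofReal_mul zero_le_two, ENNReal.ofReal_ofNat]

lemma one_le_sq_mul_one_add_rpow_neg {b N : ℝ} (hb : 0 < b) (hN : 2 ≤ N) :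
    1 ≤ b ^ 2 * (1 + b ^ (-N)) := by
  rcases le_or_gt b 1 with hb1 | hb1
  · have hpow : b ^ 2 * b ^ (-N) = b ^ (2 - N) := by
      rw [sub_eq_add_neg, Real.rpow_add hb, Real.rpow_two]
    have := Real.one_le_rpow_of_pos_of_le_one_of_nonpos hb hb1 (show 2 - N ≤ 0 by linarith)
    nlinarith [sq_nonneg b]
  · nlinarith [Real.rpow_nonneg hb.le (-N)]

lemma sq_add_add_one_le {x y B : ℝ} (h : y ^ 2 ≤ x ^ 2 * (1 + B)) :
    (x + y + 1) ^ 2 ≤ x ^ 2 * (6 + 3 * B) + 3 := by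
  nlinarith [sq_nonneg (x - y), sq_nonneg (x - 1), sq_nonneg (y - 1)]

/-- Lemma 7.10 (`sumlemma`): a lattice sum estimate. -/
theorem lattice_sum_bound (N : ℝ) (hN : 2 < N) :
    ∃ c₃ c₄ c₅ : ℝ, 0 < c₃ ∧ 0 < c₄ ∧ 0 < c₅ ∧
      ∀ a b : ℝ, 0 < a → 0 < b →
        (∑' k : ℤ × ℤ,
            ENNReal.ofReal
              (jap (max (a * Real.sqrt ((k.1 : ℝ) ^ 2 + (k.2 : ℝ) ^ 2) - b) 0) ^ (-N))) ≤
          ENNReal.ofReal ((b / a) ^ 2 * (c₃ + c₄ * b ^ (-N)) + c₅) := by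
  set C := 2 * (1 + realZeta (N / 2))
  have hC : 0 < C := by linarith [realZeta_nonneg (N / 2)]
  refine ⟨6 * C ^ 2, 3 * C ^ 2, 3 * C ^ 2, by positivity, by positivity, by positivity, ?_⟩
  intro a b ha hb
  set g : ℤ → ℝ≥0∞ := fun i => ENNReal.ofReal (jap (max (a * |(i : ℝ)| - b) 0) ^ (-(N / 2)))
  have hg : ∑' i, g i ≤ ENNReal.ofReal (C * (b / a + 1 / a + 1)) :=
    tsum_jap_posPart_rpow_neg_int_le ha hb.le (by linarith)
  have hinv : (1 / a) ^ 2 ≤ (b / a) ^ 2 * (1 + b ^ (-N)) := by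
    have := one_le_sq_mul_one_add_rpow_neg hb hN.le
    rw [div_pow, div_pow, div_mul_eq_mul_div, mul_comm]
    gcongr
    linarith
  calc _ ≤ ∑' k : ℤ × ℤ, g k.1 * g k.2 := ENNReal.tsum_le_tsum fun k => by
        rw [← ENNReal.ofReal_mul (Real.rpow_nonneg (jap_pos _).le _)]
        exact ENNReal.ofReal_le_ofReal (jap_posPart_rpow_neg_le_mul ha.le (by linarith) _ _)
    _ = (∑' i, g i) * ∑' i, g i := by
        simp_rw [ENNReal.tsum_prod', ENNReal.tsum_mul_left, ENNReal.tsum_mul_right]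
    _ ≤ ENNReal.ofReal (C * (b / a + 1 / a + 1)) * ENNReal.ofReal (C * (b / a + 1 / a + 1)) :=
        mul_le_mul' hg hg
    _ = ENNReal.ofReal (C ^ 2 * (b / a + 1 / a + 1) ^ 2) := by
        rw [← ENNReal.ofReal_mul (by positivity)]; ring_nf
    _ ≤ _ := ENNReal.ofReal_le_ofReal <| by
        nlinarith [sq_add_add_one_le hinv, sq_nonneg C]

end
end
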